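/- Let (X,τ) be a topological space and A ⊆ X a preopen set (A ⊆ interior(closure(A))). For each x ∈ A \ interior(A) let U_x be an open set with x ∈ U_x and U_x ⊆ interior(closure(A)), and let I_A be the ideal generated by {U_x \ A : x ∈ A \ interior(A)}. Then the only open set of τ belonging to I_A is the empty set (τ ∩ I_A = {∅}). -/

import Mathlib

open TopologicalSpace Set Topology

/-- The ideal generated by the sets `U x \ A` for `x ∈ A \ interior A`. -/
def genIdeal {X : Type*} [TopologicalSpace X] (A : Set X) (U : X → Set X) : Set (Set X) :=
  {S | ∃ F : Finset X, ↑F ⊆ A \ interior A ∧ S ⊆ ⋃ x ∈ F, U x \ A}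

section

variable {X : Type*} [TopologicalSpace X] {A S : Set X}

theorem IsOpen.eq_empty_of_subset_closure_diff (hS : IsOpen S) (h : S ⊆ closure A \ A) :
    S = ∅ := by
  have hdisj : Disjoint S (closure A) :=
    (disjoint_left.2 fun _ hy hyA => (h hy).2 hyA).closure_right hS
  exact subset_empty_iff.1 fun y hy => disjoint_left.1 hdisj hy (h hy).1

theorem empty_mem_genIdeal (U : X → Set X) : ∅ ∈ genIdeal A U :=
  ⟨∅, by simp, empty_subset _⟩

theorem subset_closure_diff_of_mem_genIdeal {U : X → Set X}
    (hU : ∀ x ∈ A \ interior A, U x ⊆ closure A) (hS : S ∈ genIdeal A U) :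
    S ⊆ closure A \ A := by
  obtain ⟨F, hF, hSF⟩ := hS
  intro y hy
  obtain ⟨x, hxF, hyU, hyA⟩ := mem_iUnion₂.1 (hSF hy)
  exact ⟨hU x (hF hxF) hyU, hyA⟩

end

theorem stmt9_general {X : Type*} [TopologicalSpace X] (A : Set X)
    (U : X → Set X)
    (hUsub : ∀ x ∈ A \ interior A, U x ⊆ interior (closure A)) :
    {S : Set X | IsOpen S} ∩ genIdeal A U = {∅} := by
  ext S
  refine ⟨fun ⟨hSopen, hSideal⟩ => ?_, ?_⟩
  · have hU : ∀ x ∈ A \ interior A, U x ⊆ closure A :=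
      fun x hx => (hUsub x hx).trans interior_subset
    exact hSopen.eq_empty_of_subset_closure_diff (subset_closure_diff_of_mem_genIdeal hU hSideal)
  · rintro rfl
    exact ⟨isOpen_empty, empty_mem_genIdeal U⟩

theorem stmt9 {X : Type*} [TopologicalSpace X] (A : Set X)
    (hA : A ⊆ interior (closure A))
    (U : X → Set X)
    (hUopen : ∀ x ∈ A \ interior A, IsOpen (U x))
    (hUmem : ∀ x ∈ A \ interior A, x ∈ U x)
    (hUsub : ∀ x ∈ A \ interior A, U x ⊆ interior (closure A)) :
    {S : Set X | IsOpen S} ∩ genIdeal A U = {∅} :=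
  stmt9_general A U hUsub
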